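/- Correctness of the sorted-threshold simplex projection algorithm: given v ∈ ℝ^P, sort v into u₁ ≥ … ≥ u_P, let ρ = max{j : uⱼ − (1/j)(∑_{i≤j} uᵢ − 1) > 0} and θ = (1/ρ)(∑_{i≤ρ} uᵢ − 1). Then the vector α with αₚ = max(vₚ − θ, 0) is the Euclidean projection of v onto the probability simplex, i.e., α = argmin_{x ∈ Δ} ‖v − x‖². -/
import Mathlib


/-- Correctness of the sorted-threshold simplex projection algorithm: sort `v` into
descending order `u₁ ≥ … ≥ u_P` (via a permutation `σ`), let
`ρ = max{j : uⱼ − (1/j)(∑_{i≤j} uᵢ − 1) > 0}` and `θ = (1/ρ)(∑_{i≤ρ} uᵢ − 1)`.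
Then `α` with `αₚ = max(vₚ − θ, 0)` is the Euclidean projection of `v` onto the
probability simplex `Δ`, i.e. the minimizer of `‖v − x‖` over `x ∈ Δ`.
(Indices `j : Fin P` are zero-based, so position `j` corresponds to the first
`j + 1` sorted entries.) -/
theorem simplex_projection_algorithm_correct (P : ℕ) (hP : 0 < P)
    (Δ : Set (EuclideanSpace ℝ (Fin P)))
    (hΔ : Δ = {x | (∀ i, 0 ≤ x i) ∧ ∑ i, x i = 1})
    (v : EuclideanSpace ℝ (Fin P))
    (σ : Equiv.Perm (Fin P)) (u : Fin P → ℝ) (hu : ∀ i, u i = v (σ i))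
    (hsort : Antitone u)
    (ρ : Fin P)
    (hρ : u ρ - (1 / ((ρ : ℕ) + 1 : ℝ)) * ((∑ i ∈ Finset.Iic ρ, u i) - 1) > 0)
    (hρmax : ∀ j : Fin P,
      u j - (1 / ((j : ℕ) + 1 : ℝ)) * ((∑ i ∈ Finset.Iic j, u i) - 1) > 0 → j ≤ ρ)
    (θ : ℝ) (hθ : θ = (1 / ((ρ : ℕ) + 1 : ℝ)) * ((∑ i ∈ Finset.Iic ρ, u i) - 1))
    (α : EuclideanSpace ℝ (Fin P)) (hα : ∀ p, α p = max (v p - θ) 0) :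
    α ∈ Δ ∧ ∀ x ∈ Δ, ‖v - α‖ ≤ ‖v - x‖ := by
  have hρ1 : ((ρ : ℕ) + 1 : ℝ) ≠ 0 := by positivity
  -- S_ρ - 1 = (ρ+1) θ
  have hSρ : (∑ i ∈ Finset.Iic ρ, u i) - 1 = ((ρ : ℕ) + 1 : ℝ) * θ := by
    rw [hθ]; field_simp
  -- θ < u ρ
  have hθρ : θ < u ρ := by rw [hθ]; linarith
  -- key : for j > ρ, u j ≤ θ
  have key : ∀ n : ℕ, ∀ j : Fin P, (j : ℕ) = n → ρ < j → u j ≤ θ := by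
    intro n
    induction n using Nat.strong_induction_on with
    | _ n ih =>
      intro j hjn hρj
      have hfj : u j - (1 / ((j : ℕ) + 1 : ℝ)) * ((∑ i ∈ Finset.Iic j, u i) - 1) ≤ 0 := by
        by_contra h
        exact absurd (hρmax j (lt_of_not_ge h)) (not_le.mpr hρj)
      have hj1 : ((j : ℕ) + 1 : ℝ) ≠ 0 := by positivity
      have hsplit : Finset.Iic j = Finset.Iic ρ ∪ Finset.Ioc ρ j := by
        ext i
        simp only [Finset.mem_Iic, Finset.mem_union, Finset.mem_Ioc, Fin.le_def, Fin.lt_def]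
        have := hρj
        rw [Fin.lt_def] at this
        omega
      have hdisj : Disjoint (Finset.Iic ρ) (Finset.Ioc ρ j) := by
        rw [Finset.disjoint_left]
        intro a ha hb
        rw [Finset.mem_Iic] at ha
        rw [Finset.mem_Ioc] at hb
        exact absurd ha (not_le.mpr hb.1)
      have hIoc : Finset.Ioc ρ j = insert j (Finset.Ioo ρ j) := (Finset.Ioo_insert_right hρj).symm
      have hIoo_le : ∀ i ∈ Finset.Ioo ρ j, u i ≤ θ := by
        intro i hi
        rw [Finset.mem_Ioo] at hi
        exact ih (i : ℕ) (by rw [← hjn]; exact hi.2) i rfl hi.1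
      have hsum_Ioo : ∑ i ∈ Finset.Ioo ρ j, u i ≤ ((Finset.Ioo ρ j).card : ℝ) * θ := by
        calc ∑ i ∈ Finset.Ioo ρ j, u i ≤ ∑ _i ∈ Finset.Ioo ρ j, θ :=
              Finset.sum_le_sum hIoo_le
          _ = ((Finset.Ioo ρ j).card : ℝ) * θ := by rw [Finset.sum_const, nsmul_eq_mul]
      have hcard : (Finset.Ioo ρ j).card = (j : ℕ) - (ρ : ℕ) - 1 := Fin.card_Ioo ρ j
      have hsumj : ∑ i ∈ Finset.Iic j, u i =
          (∑ i ∈ Finset.Iic ρ, u i) + (u j + ∑ i ∈ Finset.Ioo ρ j, u i) := by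
        rw [hsplit, Finset.sum_union hdisj, hIoc,
          Finset.sum_insert (by simp [Finset.mem_Ioo])]
      -- from hfj : (j+1) u j ≤ S_j - 1
      have hfj' : ((j : ℕ) + 1 : ℝ) * u j ≤ (∑ i ∈ Finset.Iic j, u i) - 1 := by
        rw [sub_nonpos] at hfj
        calc ((j : ℕ) + 1 : ℝ) * u j
            ≤ ((j : ℕ) + 1 : ℝ) * ((1 / ((j : ℕ) + 1 : ℝ)) * ((∑ i ∈ Finset.Iic j, u i) - 1)) :=
              mul_le_mul_of_nonneg_left hfj (by positivity)
          _ = (∑ i ∈ Finset.Iic j, u i) - 1 := by field_simp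
      have hcards : ((j : ℕ) : ℝ) = ((ρ : ℕ) : ℝ) + 1 + (((Finset.Ioo ρ j).card : ℕ) : ℝ) := by
        have hlt : (ρ : ℕ) < (j : ℕ) := hρj
        rw [hcard]
        have h5 : (j : ℕ) - (ρ : ℕ) - 1 = (j : ℕ) - ((ρ : ℕ) + 1) := by omega
        rw [h5, Nat.cast_sub (by omega)]
        push_cast
        ring
      have hjpos : (0 : ℝ) < ((j : ℕ) : ℝ) := by
        have : ρ < j := hρj
        rw [Fin.lt_def] at this
        have : 0 < (j : ℕ) := Nat.pos_of_ne_zero (by omega)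
        exact_mod_cast this
      -- combine
      have : ((j : ℕ) : ℝ) * u j ≤ ((j : ℕ) : ℝ) * θ := by
        have h1 : ((j : ℕ) + 1 : ℝ) * u j ≤
            ((ρ : ℕ) + 1 : ℝ) * θ + (u j + ((Finset.Ioo ρ j).card : ℝ) * θ) := by
          calc ((j : ℕ) + 1 : ℝ) * u j ≤ (∑ i ∈ Finset.Iic j, u i) - 1 := hfj'
            _ = ((∑ i ∈ Finset.Iic ρ, u i) - 1) + (u j + ∑ i ∈ Finset.Ioo ρ j, u i) := by
                rw [hsumj]; ring
            _ ≤ ((ρ : ℕ) + 1 : ℝ) * θ + (u j + ((Finset.Ioo ρ j).card : ℝ) * θ) := by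
                rw [hSρ]; linarith
        have h2 : ((ρ : ℕ) + 1 : ℝ) * θ + ((Finset.Ioo ρ j).card : ℝ) * θ
            = ((j : ℕ) : ℝ) * θ := by rw [hcards]; ring
        linarith
      exact le_of_mul_le_mul_left this hjpos
  have hkey : ∀ j : Fin P, ρ < j → u j ≤ θ := fun j hj => key (j : ℕ) j rfl hj
  -- u i > θ for i ≤ ρ
  have hgt : ∀ i : Fin P, i ≤ ρ → θ < u i := fun i hi => lt_of_lt_of_le hθρ (hsort hi)
  -- sum of α is 1
  have hsumα : ∑ p, α p = 1 := by
    have h1 : ∑ p, α p = ∑ i, max (u i - θ) 0 := by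
      calc ∑ p, α p = ∑ p, max (v p - θ) 0 :=
            Finset.sum_congr rfl (fun p _ => by rw [hα])
        _ = ∑ i, max (v (σ i) - θ) 0 := (Equiv.sum_comp σ (fun p => max (v p - θ) 0)).symm
        _ = ∑ i, max (u i - θ) 0 := Finset.sum_congr rfl (fun i _ => by rw [hu])
    rw [h1, ← Finset.sum_add_sum_compl (Finset.Iic ρ)]
    have h2 : ∑ i ∈ Finset.Iic ρ, max (u i - θ) 0 = ∑ i ∈ Finset.Iic ρ, (u i - θ) := by
      apply Finset.sum_congr rfl
      intro i hi
      rw [Finset.mem_Iic] at hi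
      exact max_eq_left (le_of_lt (sub_pos.mpr (hgt i hi)))
    have h3 : ∑ i ∈ (Finset.Iic ρ)ᶜ, max (u i - θ) 0 = 0 := by
      apply Finset.sum_eq_zero
      intro i hi
      rw [Finset.mem_compl, Finset.mem_Iic] at hi
      exact max_eq_right (sub_nonpos.mpr (hkey i (not_le.mp hi)))
    rw [h2, h3, add_zero, Finset.sum_sub_distrib, Finset.sum_const, Fin.card_Iic,
      nsmul_eq_mul]
    push_cast
    linarith [hSρ]
  have hαnn : ∀ p, 0 ≤ α p := fun p => by rw [hα]; exact le_max_right _ _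
  constructor
  · rw [hΔ]; exact ⟨hαnn, hsumα⟩
  · intro x hx
    rw [hΔ] at hx
    obtain ⟨hxnn, hxsum⟩ := hx
    -- key inequality: ∑ (v p - α p)(x p - α p) ≤ 0
    have hip : ∑ p, (v p - α p) * (x p - α p) ≤ 0 := by
      have hle : ∀ p, (v p - α p) * (x p - α p) ≤ θ * (x p - α p) := by
        intro p
        rcases le_or_gt θ (v p) with h | h
        · have : α p = v p - θ := by rw [hα]; exact max_eq_left (by linarith)
          rw [this]; ring_nf; exact le_refl _
        · have hαp : α p = 0 := by rw [hα]; exact max_eq_right (by linarith)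
          rw [hαp, sub_zero, sub_zero]
          exact mul_le_mul_of_nonneg_right (by linarith) (hxnn p)
      calc ∑ p, (v p - α p) * (x p - α p) ≤ ∑ p, θ * (x p - α p) :=
            Finset.sum_le_sum (fun p _ => hle p)
        _ = θ * (∑ p, x p - ∑ p, α p) := by
            rw [← Finset.mul_sum, Finset.sum_sub_distrib]
        _ = 0 := by rw [hxsum, hsumα]; ring
    -- compare squared norms
    have hsq : ∑ p, (v p - α p) ^ 2 ≤ ∑ p, (v p - x p) ^ 2 := by
      have hid : ∑ p, (v p - x p) ^ 2 =
          ∑ p, (v p - α p) ^ 2 - 2 * ∑ p, (v p - α p) * (x p - α p)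
            + ∑ p, (x p - α p) ^ 2 := by
        rw [Finset.mul_sum, ← Finset.sum_sub_distrib, ← Finset.sum_add_distrib]
        apply Finset.sum_congr rfl
        intro p _
        ring
      have hnn : 0 ≤ ∑ p, (x p - α p) ^ 2 :=
        Finset.sum_nonneg (fun p _ => sq_nonneg _)
      linarith
    rw [EuclideanSpace.norm_eq, EuclideanSpace.norm_eq]
    apply Real.sqrt_le_sqrt
    simpa [Real.norm_eq_abs, sq_abs] using hsq
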